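/- Let P = R₁ ∪ … ∪ Rₙ be a well-moded program forming a hierarchy Rₙ ⊐ … ⊐ R₁, and let | |₁, …, | |ₙ be moded level mappings for R₁, …, Rₙ. Then every well-moded query is strongly bounded wrt P and | |₁, …, | |ₙ. -/
import Mathlib


open scoped Classical

namespace LDNF

/-- An abstract first-order logic-programming syntax: atoms built over terms,
with substitutions, groundness, predicate symbols and moded argument positions. -/
structure Sys where
  Atom : Type
  Trm : Type
  Var : Type
  Subst : Type
  sub : Atom → Subst → Atom
  subT : Trm → Subst → Trm
  ground : Atom → Prop
  pred : Atom → ℕ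
  inArgs : Atom → List Trm
  outArgs : Atom → List Trm
  tvars : Trm → Set Var
  inTys : ℕ → List (Set Trm)
  outTys : ℕ → List (Set Trm)
  pred_sub : ∀ a θ, pred (sub a θ) = pred a
  inArgs_sub : ∀ a θ, inArgs (sub a θ) = (inArgs a).map (fun t => subT t θ)
  outArgs_sub : ∀ a θ, outArgs (sub a θ) = (outArgs a).map (fun t => subT t θ)
  subT_fix : ∀ t θ, tvars t = ∅ → subT t θ = t

inductive Lit (S : Sys) : Type
  | pos (a : S.Atom)
  | neg (a : S.Atom)

def Lit.atom {S : Sys} : Lit S → S.Atom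
  | .pos a => a
  | .neg a => a

abbrev Query (S : Sys) := List (Lit S)

structure Clause (S : Sys) where
  head : S.Atom
  body : Query S

abbrev Program (S : Sys) := Set (Clause S)

variable (S : Sys)

def subL (L : Lit S) (θ : S.Subst) : Lit S :=
  match L with
  | .pos a => .pos (S.sub a θ)
  | .neg a => .neg (S.sub a θ)

def subQ (Q : Query S) (θ : S.Subst) : Query S := Q.map (fun L => subL S L θ)

def subC (c : Clause S) (θ : S.Subst) : Clause S := ⟨S.sub c.head θ, subQ S c.body θ⟩

def groundL (L : Lit S) : Prop := S.ground L.atom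
def groundQ (Q : Query S) : Prop := ∀ L ∈ Q, groundL S L
def groundC (c : Clause S) : Prop := S.ground c.head ∧ groundQ S c.body

/-- Herbrand interpretation `M` satisfies a ground literal. -/
def modelsL (M : Set S.Atom) (L : Lit S) : Prop :=
  match L with
  | .pos a => a ∈ M
  | .neg a => a ∉ M

def modelsQ (M : Set S.Atom) (Q : Query S) : Prop := ∀ L ∈ Q, modelsL S M L

/-- `M` is a (Herbrand) model of the program `P`. -/
def ModelOf (M : Set S.Atom) (P : Program S) : Prop :=
  ∀ c ∈ P, ∀ θ, groundC S (subC S c θ) →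
    modelsQ S M (subQ S c.body θ) → S.sub c.head θ ∈ M

/-- Level of a ground literal: `|¬A| = |A|`. -/
def litLvl (lvl : S.Atom → ℕ) (L : Lit S) : ℕ := lvl L.atom

/-- The set of levels of ground instances of an atom. -/
def levelsA (lvl : S.Atom → ℕ) (a : S.Atom) : Set ℕ :=
  {m | ∃ θ, S.ground (S.sub a θ) ∧ m = lvl (S.sub a θ)}

def BoundedA (lvl : S.Atom → ℕ) (a : S.Atom) : Prop := (levelsA S lvl a).Finite

noncomputable def maxLvlA (lvl : S.Atom → ℕ) (a : S.Atom) : ℕ := sSup (levelsA S lvl a)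

def levelsL (lvl : S.Atom → ℕ) (L : Lit S) : Set ℕ :=
  {m | ∃ θ, groundL S (subL S L θ) ∧ m = litLvl S lvl (subL S L θ)}

def BoundedL (lvl : S.Atom → ℕ) (L : Lit S) : Prop := (levelsL S lvl L).Finite

noncomputable def maxLvlL (lvl : S.Atom → ℕ) (L : Lit S) : ℕ := sSup (levelsL S lvl L)

/-- A relation `p` is defined in `P` if it occurs in the head of a clause of `P`. -/
def DefinedIn (p : ℕ) (P : Program S) : Prop := ∃ c ∈ P, S.pred c.head = p

/-- A relation `p` occurs in `P` (in a head or in a body). -/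
def OccursIn (p : ℕ) (P : Program S) : Prop :=
  ∃ c ∈ P, S.pred c.head = p ∨ ∃ L ∈ c.body, S.pred (Lit.atom L) = p

/-- `P` extends `R`: no relation defined in `P` occurs in `R`. -/
def Extends (P R : Program S) : Prop := ∀ p, DefinedIn S p P → ¬ OccursIn S p R

/-- `p` refers to `q` in `P`. -/
def RefersTo (P : Program S) (p q : ℕ) : Prop :=
  ∃ c ∈ P, S.pred c.head = p ∧ ∃ L ∈ c.body, S.pred (Lit.atom L) = q

/-- `p` depends on `q`: reflexive-transitive closure of `RefersTo`. -/
def DependsOn (P : Program S) : ℕ → ℕ → Prop := Relation.ReflTransGen (RefersTo S P)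

def MutRec (P : Program S) (p q : ℕ) : Prop := DependsOn S P p q ∧ DependsOn S P q p

def StrictDep (P : Program S) (p q : ℕ) : Prop := DependsOn S P p q ∧ ¬ DependsOn S P q p

/-- Relations occurring in a negative literal of `P`. -/
def NegP (P : Program S) : Set ℕ :=
  {q | ∃ c ∈ P, ∃ a, Lit.neg a ∈ c.body ∧ S.pred a = q}

/-- Relations on which the relations in `NegP` depend. -/
def NegStar (P : Program S) : Set ℕ := {q | ∃ p ∈ NegP S P, DependsOn S P p q}

/-- The clauses of `P` defining a relation of `NegStar P`. -/
def Pminus (P : Program S) : Program S := {c ∈ P | S.pred c.head ∈ NegStar S P}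

/-- `M` is a complete model of `P` (relative to an abstract notion `CompModels`
of being a model of Clark's completion). -/
def CompleteModel (CompModels : Program S → Set S.Atom → Prop)
    (P : Program S) (M : Set S.Atom) : Prop :=
  ModelOf S M P ∧ CompModels (Pminus S P) {a ∈ M | S.pred a ∈ NegStar S P}

/-- Acceptability of `P` wrt a level mapping and a model. -/
def Acceptable (P : Program S) (lvl : S.Atom → ℕ) (M : Set S.Atom) : Prop :=
  ∀ c ∈ P, ∀ θ, groundC S (subC S c θ) →
    ∀ i (h : i < c.body.length),
      modelsQ S M (subQ S (c.body.take i) θ) →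
      lvl (S.sub c.head θ) > litLvl S lvl (subL S (c.body.get ⟨i, h⟩) θ)

/-- Semi-acceptability of `P` wrt a level mapping and a model. -/
def SemiAcceptable (P : Program S) (lvl : S.Atom → ℕ) (M : Set S.Atom) : Prop :=
  ∀ c ∈ P, ∀ θ, groundC S (subC S c θ) →
    ∀ i (h : i < c.body.length),
      modelsQ S M (subQ S (c.body.take i) θ) →
      (MutRec S P (S.pred c.head) (S.pred (Lit.atom (c.body.get ⟨i, h⟩))) →
        lvl (S.sub c.head θ) > litLvl S lvl (subL S (c.body.get ⟨i, h⟩) θ)) ∧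
      (StrictDep S P (S.pred c.head) (S.pred (Lit.atom (c.body.get ⟨i, h⟩))) →
        lvl (S.sub c.head θ) ≥ litLvl S lvl (subL S (c.body.get ⟨i, h⟩) θ))

/-- `Call_P(Q)` for an abstract LDNF-descendant relation `Desc`:
the first literals of the LDNF-descendants of `P ∪ {Q}`. -/
def CallSet (Desc : Program S → Query S → Query S → Prop)
    (P : Program S) (Q : Query S) : Set (Lit S) :=
  {L | ∃ rest : Query S, Desc P Q (L :: rest)}

/-- Union of the modules with index `< n`. -/
def UnionBelow (R : ℕ → Program S) (n : ℕ) : Program S := ⋃ j < n, R j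

/-- `R (n-1) ⊐ … ⊐ R 0` is a hierarchy: each module extends the union of the lower ones. -/
def Hierarchy (R : ℕ → Program S) (n : ℕ) : Prop :=
  ∀ i < n, Extends S (R i) (UnionBelow S R i)

/-- `Q` is strongly bounded wrt the hierarchy `R 0, …, R (n-1)` and the level
mappings `lvl 0, …, lvl (n-1)`. -/
def StronglyBounded (Desc : Program S → Query S → Query S → Prop)
    (R : ℕ → Program S) (n : ℕ) (lvl : ℕ → S.Atom → ℕ) (Q : Query S) : Prop :=
  ∀ a : S.Atom, Lit.pos a ∈ CallSet S Desc (UnionBelow S R n) Q →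
    ∀ i < n, DefinedIn S (S.pred a) (R i) → BoundedA S (lvl i) a

/-- A `P`-closed class of queries: closed under non-empty prefixes and under
LDNF-descendants. -/
def PClosed (Desc : Program S → Query S → Query S → Prop)
    (P : Program S) (C : Set (Query S)) : Prop :=
  (∀ Q ∈ C, ∀ Q₁ Q₂ : Query S, Q = Q₁ ++ Q₂ → Q₁ ≠ [] → Q₁ ∈ C) ∧
  (∀ Q ∈ C, ∀ Q' : Query S, Desc P Q Q' → Q' ∈ C)

/-- A query all of whose literals are defined in `P`. -/
def DefinedQ (Q : Query S) (P : Program S) : Prop :=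
  ∀ L ∈ Q, DefinedIn S (S.pred (Lit.atom L)) P

def DefiniteP (P : Program S) : Prop :=
  ∀ c ∈ P, ∀ L ∈ c.body, ∃ a : S.Atom, L = Lit.pos a

/-- Boundedness of a query wrt a level mapping and a model (Apt–Pedreschi). -/
def BoundedQ (lvl : S.Atom → ℕ) (M : Set S.Atom) (Q : Query S) : Prop :=
  ∀ i (h : i < Q.length),
    Set.Finite {m | ∃ θ, groundQ S (subQ S Q θ) ∧
      modelsQ S M (subQ S (Q.take i) θ) ∧
      m = litLvl S lvl (subL S (Q.get ⟨i, h⟩) θ)}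

/- ## Modes -/

def inVarsA (a : S.Atom) : Set S.Var := ⋃ t ∈ S.inArgs a, S.tvars t
def outVarsA (a : S.Atom) : Set S.Var := ⋃ t ∈ S.outArgs a, S.tvars t

/-- A well-moded query: the input variables of each literal occur among the
output variables of the preceding literals. -/
def WellModedQ (Q : Query S) : Prop :=
  ∀ i (h : i < Q.length),
    ∀ v ∈ inVarsA S (Lit.atom (Q.get ⟨i, h⟩)),
      ∃ j, ∃ hj : j < i, v ∈ outVarsA S (Lit.atom (Q.get ⟨j, hj.trans h⟩))

def WellModedC (c : Clause S) : Prop :=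
  (∀ i (h : i < c.body.length),
    ∀ v ∈ inVarsA S (Lit.atom (c.body.get ⟨i, h⟩)),
      v ∈ inVarsA S c.head ∨
        ∃ j, ∃ hj : j < i, v ∈ outVarsA S (Lit.atom (c.body.get ⟨j, hj.trans h⟩))) ∧
  (∀ v ∈ outVarsA S c.head,
      v ∈ inVarsA S c.head ∨
        ∃ j, ∃ hj : j < c.body.length, v ∈ outVarsA S (Lit.atom (c.body.get ⟨j, hj⟩)))

def WellModedP (P : Program S) : Prop := ∀ c ∈ P, WellModedC S c

/-- A moded level mapping: the level of an atom does not depend on the terms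
filling in its output positions. -/
def ModedLvl (lvl : S.Atom → ℕ) : Prop :=
  ∀ a b : S.Atom, S.pred a = S.pred b → S.inArgs a = S.inArgs b → lvl a = lvl b

/- ## Types -/

def inPairs (a : S.Atom) : List (S.Trm × Set S.Trm) :=
  (S.inArgs a).zip (S.inTys (S.pred a))

def outPairs (a : S.Atom) : List (S.Trm × Set S.Trm) :=
  (S.outArgs a).zip (S.outTys (S.pred a))

/-- Truth of a type judgement `prem ⇒ conc`. -/
def Judge (prem conc : List (S.Trm × Set S.Trm)) : Prop :=
  ∀ θ, (∀ p ∈ prem, S.subT p.1 θ ∈ p.2) → ∀ q ∈ conc, S.subT q.1 θ ∈ q.2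

/-- The atoms of the positive literals of a query. -/
def posAtoms (Q : Query S) : List S.Atom :=
  Q.filterMap (fun L => match L with | .pos a => some a | .neg _ => none)

/-- The typed output terms of the positive literals of a query. -/
def outsOf (Q : Query S) : List (S.Trm × Set S.Trm) :=
  (posAtoms S Q).foldr (fun a acc => outPairs S a ++ acc) []

/-- A well-typed query. -/
def WellTypedQ (Q : Query S) : Prop :=
  ∀ j (h : j < Q.length),
    Judge S (outsOf S (Q.take j)) (inPairs S (Lit.atom (Q.get ⟨j, h⟩)))

/-- A well-typed clause. -/
def WellTypedC (c : Clause S) : Prop :=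
  (∀ j (h : j < c.body.length),
    Judge S (inPairs S c.head ++ outsOf S (c.body.take j))
      (inPairs S (Lit.atom (c.body.get ⟨j, h⟩)))) ∧
  Judge S (inPairs S c.head ++ outsOf S c.body) (outPairs S c.head)

def WellTypedP (P : Program S) : Prop := ∀ c ∈ P, WellTypedC S c

/-- A well-typed atom: correctly typed in its input positions. -/
def WTAtom (a : S.Atom) : Prop := Judge S [] (inPairs S a)

/-- Finest decomposition: a hierarchy in which any two predicates defined in the
same module are mutually recursive or independent. -/
def FinestDecomp (R : ℕ → Program S) (n : ℕ) : Prop :=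
  Hierarchy S R n ∧
  ∀ i < n, ∀ p q : ℕ, DefinedIn S p (R i) → DefinedIn S q (R i) →
    ¬ StrictDep S (UnionBelow S R n) p q ∧ ¬ StrictDep S (UnionBelow S R n) q p


/-- in a well-moded hierarchy with moded level mappings, every
well-moded query is strongly bounded.  (`hclosed` records the persistence of
well-modedness under LDNF-resolution, proved in the paper.) -/
theorem stmt9 (S : Sys)
    (Desc : Program S → Query S → Query S → Prop)
    (R : ℕ → Program S) (n : ℕ) (lvl : ℕ → S.Atom → ℕ)
    (hh : Hierarchy S R n)
    (hwm : WellModedP S (UnionBelow S R n))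
    (hmoded : ∀ i < n, ModedLvl S (lvl i))
    (hclosed : ∀ Q Q' : Query S, WellModedQ S Q →
      Desc (UnionBelow S R n) Q Q' → WellModedQ S Q') :
    ∀ Q : Query S, WellModedQ S Q → StronglyBounded S Desc R n lvl Q := by
  intro Q hQ a ha i hi _hdef
  obtain ⟨rest, hdesc⟩ := ha
  have hwmQ' := hclosed Q _ hQ hdesc
  -- the first literal of a well-moded query has no input variables
  have hin : inVarsA S a = ∅ := by
    ext v
    simp only [Set.mem_empty_iff_false, iff_false]
    intro hv
    obtain ⟨j, hj, -⟩ := hwmQ' 0 (by simp) v hv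
    exact absurd hj (Nat.not_lt_zero j)
  -- hence its input arguments are ground, so substitution fixes them
  have hargs : ∀ θ, S.inArgs (S.sub a θ) = S.inArgs a := by
    intro θ
    rw [S.inArgs_sub]
    have : ∀ t ∈ S.inArgs a, S.subT t θ = t := by
      intro t ht
      apply S.subT_fix
      apply Set.eq_empty_of_subset_empty
      intro v hv
      have : v ∈ inVarsA S a := Set.mem_biUnion ht hv
      rw [hin] at this
      exact this.elim
    calc (S.inArgs a).map (fun t => S.subT t θ)
        = (S.inArgs a).map id := List.map_congr_left this
      _ = S.inArgs a := List.map_id _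
  -- the moded level mapping gives the same level to all instances of `a`
  have hconst : ∀ θ θ', lvl i (S.sub a θ) = lvl i (S.sub a θ') := by
    intro θ θ'
    apply hmoded i hi
    · rw [S.pred_sub, S.pred_sub]
    · rw [hargs, hargs]
  apply Set.Subsingleton.finite
  rintro m₁ ⟨θ₁, -, rfl⟩ m₂ ⟨θ₂, -, rfl⟩
  exact hconst θ₁ θ₂

end LDNF
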